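/- arXiv:1603.06123 — 4 statements merged into one kernel-verified Lean document; each statement's English description precedes it below -/
import Mathlib

section
/- Let S be a set of solutions with D, R : S → ℝ and budget B. Suppose s₁ is optimal for the Lagrangian cost with multiplier λ₁ ≥ 0 and R(s₁) ≤ B, and s₂ is optimal for the Lagrangian cost with multiplier λ₂ ≥ 0 and R(s₂) > B. If s° minimizes D over the feasible set {s ∈ S : R(s) ≤ B}, then D(s₂) ≤ D(s°) ≤ D(s₁), and hence |D(s₁) − D(s°)| ≤ |D(s₁) − D(s₂)|. -/
/-! A Lagrangian minimizer `s₂` beats every point of smaller rate, since the penalty term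
`λ₂ (R s - R s₂)` is then nonpositive; as `R s° ≤ B < R s₂`, this gives `D s₂ ≤ D s°`, while
`D s° ≤ D s₁` is just feasibility of `s₁`. -/

lemma le_of_lagrangian_le_of_rate_le {S : Type*} {D R : S → ℝ} {lam : ℝ} {s₀ s : S}
    (hlam : 0 ≤ lam) (hopt : D s₀ + lam * R s₀ ≤ D s + lam * R s) (hR : R s ≤ R s₀) :
    D s₀ ≤ D s := by
  linarith [mul_le_mul_of_nonneg_left hR hlam]

theorem stmt_1_general {S : Type*} (D R : S → ℝ) (B lam₂ : ℝ)
    (hlam₂ : 0 ≤ lam₂) (s₁ s₂ sCirc : S)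
    (hopt₂ : ∀ s : S, D s₂ + lam₂ * R s₂ ≤ D s + lam₂ * R s)
    (hR₁ : R s₁ ≤ B) (hR₂ : B < R s₂)
    (hfeas : R sCirc ≤ B)
    (hoptCirc : ∀ s : S, R s ≤ B → D sCirc ≤ D s) :
    D s₂ ≤ D sCirc ∧ D sCirc ≤ D s₁ ∧ |D s₁ - D sCirc| ≤ |D s₁ - D s₂| := by
  have hlow : D s₂ ≤ D sCirc :=
    le_of_lagrangian_le_of_rate_le hlam₂ (hopt₂ sCirc) (hfeas.trans hR₂.le)
  have hhigh : D sCirc ≤ D s₁ := hoptCirc s₁ hR₁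
  exact ⟨hlow, hhigh, Set.abs_sub_right_of_mem_uIcc (Set.mem_uIcc_of_le hlow hhigh)⟩

/-- Performance bound: the constrained optimum is sandwiched between two Lagrangian
solutions with rates below and above the budget. -/
theorem stmt_1 {S : Type*} [Nonempty S] (D R : S → ℝ) (B lam₁ lam₂ : ℝ)
    (hlam₁ : 0 ≤ lam₁) (hlam₂ : 0 ≤ lam₂) (s₁ s₂ sCirc : S)
    (hopt₁ : ∀ s : S, D s₁ + lam₁ * R s₁ ≤ D s + lam₁ * R s)
    (hopt₂ : ∀ s : S, D s₂ + lam₂ * R s₂ ≤ D s + lam₂ * R s)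
    (hR₁ : R s₁ ≤ B) (hR₂ : B < R s₂)
    (hfeas : R sCirc ≤ B)
    (hoptCirc : ∀ s : S, R s ≤ B → D sCirc ≤ D s) :
    D s₂ ≤ D sCirc ∧ D sCirc ≤ D s₁ ∧ |D s₁ - D sCirc| ≤ |D s₁ - D s₂| :=
  stmt_1_general D R B lam₂ hlam₂ s₁ s₂ sCirc hopt₂ hR₁ hR₂ hfeas hoptCirc
end

section
/- Let S be a set with D, R : S → ℝ. Suppose s is Lagrangian-optimal for two distinct multipliers λ₁ < λ₂. Then for any λ strictly between λ₁ and λ₂, every Lagrangian-optimal solution t for λ satisfies D(t) + λ·R(t) = D(s) + λ·R(s) and R(t) = R(s), D(t) = D(s). (Multipliers strictly between two values sharing a common optimal solution produce only solutions with the same rate and distortion.) -/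
/-!
Adding the optimality of `s` at `μ` (tested against `t`) to that of `t` at `λ` (tested against
`s`) gives `(λ - μ) * (R t - R s) ≤ 0`: optimal rates are antitone in the multiplier. With `λ`
strictly between `λ₁` and `λ₂` this pins `R t = R s`, and at equal rates the two optimality
inequalities force `D t = D s`.
-/

def IsLagrangianMin {S : Type*} (D R : S → ℝ) (lam : ℝ) (s : S) : Prop :=
  ∀ u : S, D s + lam * R s ≤ D u + lam * R u

namespace IsLagrangianMin

variable {S : Type*} {D R : S → ℝ} {s t : S}

theorem mul_rate_sub_nonpos {μ lam : ℝ} (hs : IsLagrangianMin D R μ s)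
    (ht : IsLagrangianMin D R lam t) : (lam - μ) * (R t - R s) ≤ 0 := by
  have := hs t
  have := ht s
  linarith

theorem rate_eq {lam₁ lam lam₂ : ℝ} (h₁ : lam₁ < lam) (h₂ : lam < lam₂)
    (hs₁ : IsLagrangianMin D R lam₁ s) (hs₂ : IsLagrangianMin D R lam₂ s)
    (ht : IsLagrangianMin D R lam t) : R t = R s := by
  have hle : R t - R s ≤ 0 :=
    nonpos_of_mul_nonpos_right (hs₁.mul_rate_sub_nonpos ht) (sub_pos.2 h₁)
  have hge : 0 ≤ R t - R s :=
    nonneg_of_mul_nonpos_right (hs₂.mul_rate_sub_nonpos ht) (sub_neg.2 h₂)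
  linarith

theorem distortion_eq_of_rate_eq {μ lam : ℝ} (hs : IsLagrangianMin D R μ s)
    (ht : IsLagrangianMin D R lam t) (hR : R t = R s) : D t = D s := by
  have := hs t
  have := ht s
  rw [hR] at *
  linarith

end IsLagrangianMin

theorem stmt_5_general {S : Type*} (D R : S → ℝ) (lam₁ lam lam₂ : ℝ)
    (h₁ : lam₁ < lam) (h₂ : lam < lam₂) (s t : S)
    (hs₁ : ∀ u : S, D s + lam₁ * R s ≤ D u + lam₁ * R u)
    (hs₂ : ∀ u : S, D s + lam₂ * R s ≤ D u + lam₂ * R u)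
    (ht : ∀ u : S, D t + lam * R t ≤ D u + lam * R u) :
    D t + lam * R t = D s + lam * R s ∧ R t = R s ∧ D t = D s := by
  have hR : R t = R s := IsLagrangianMin.rate_eq h₁ h₂ hs₁ hs₂ ht
  have hD : D t = D s := IsLagrangianMin.distortion_eq_of_rate_eq hs₁ ht hR
  exact ⟨by rw [hR, hD], hR, hD⟩

/-- Multipliers strictly between two values sharing a common optimal solution produce only
solutions with the same rate and distortion as that common solution. -/
theorem stmt_5 {S : Type*} [Nonempty S] (D R : S → ℝ) (lam₁ lam lam₂ : ℝ)
    (h₁ : lam₁ < lam) (h₂ : lam < lam₂) (s t : S)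
    (hs₁ : ∀ u : S, D s + lam₁ * R s ≤ D u + lam₁ * R u)
    (hs₂ : ∀ u : S, D s + lam₂ * R s ≤ D u + lam₂ * R u)
    (ht : ∀ u : S, D t + lam * R t ≤ D u + lam * R u) :
    D t + lam * R t = D s + lam * R s ∧ R t = R s ∧ D t = D s :=
  stmt_5_general D R lam₁ lam lam₂ h₁ h₂ s t hs₁ hs₂ ht
end

section
/- Let S be a finite set with D, R : S → ℝ, and λ ∈ ℝ. Suppose s* is the unique Lagrangian minimizer for λ. Define, over all t ∈ S with R(t) > R(s*), λ⁻ = max (D(s*) − D(t)) / (R(t) − R(s*)) (assuming such t exists). Then λ⁻ < λ, and at multiplier λ⁻, both s* and any maximizer t⁻ of the above ratio are simultaneously Lagrangian-optimal among the set {s*} ∪ {t : R(t) > R(s*)}. -/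
open scoped Classical

/-!
The ratio `(D s* − D t) / (R t − R s*)` is the multiplier at which `s*` and `t` have equal
Lagrangian cost, and for `R t > R s*` it is `≤ μ` exactly when `s*` is no worse than `t` at
multiplier `μ`. Hence strict optimality of `s*` at `λ` puts every ratio below `λ`, while at the
largest ratio `λ⁻` the point `s*` beats every `t` with larger rate and ties with `t⁻`.
-/

section LagrangianComparison

variable {d₀ d r₀ r μ : ℝ}

theorem sub_div_sub_le_iff_add_mul_le (h : r₀ < r) :
    (d₀ - d) / (r - r₀) ≤ μ ↔ d₀ + μ * r₀ ≤ d + μ * r := by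
  rw [div_le_iff₀ (sub_pos.2 h)]
  constructor <;> intro <;> linarith

theorem sub_div_sub_lt_iff_add_mul_lt (h : r₀ < r) :
    (d₀ - d) / (r - r₀) < μ ↔ d₀ + μ * r₀ < d + μ * r := by
  rw [div_lt_iff₀ (sub_pos.2 h)]
  constructor <;> intro <;> linarith

theorem sub_div_sub_eq_iff_add_mul_eq (h : r₀ < r) :
    (d₀ - d) / (r - r₀) = μ ↔ d + μ * r = d₀ + μ * r₀ := by
  rw [div_eq_iff (sub_pos.2 h).ne']
  constructor <;> intro <;> linarith

end LagrangianComparison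

/-- Computing a smaller neighboring singular value: `lamMinus < lam`, and at `lamMinus`
both the previous unique minimizer and the ratio-maximizing larger-rate solution are
simultaneously optimal among the relevant set. -/
theorem stmt_12 {S : Type*} [Fintype S] (D R : S → ℝ) (lam : ℝ) (sStar : S)
    (hstrict : ∀ t : S, t ≠ sStar → D sStar + lam * R sStar < D t + lam * R t)
    (hT : (Finset.univ.filter (fun t : S => R sStar < R t)).Nonempty)
    (lamMinus : ℝ)
    (hlamMinus : lamMinus =
      (Finset.univ.filter (fun t : S => R sStar < R t)).sup' hT
        (fun t => (D sStar - D t) / (R t - R sStar)))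
    (tMinus : S) (htM : R sStar < R tMinus)
    (hattain : (D sStar - D tMinus) / (R tMinus - R sStar) = lamMinus) :
    lamMinus < lam ∧
    (∀ u : S, (u = sStar ∨ R sStar < R u) →
      D sStar + lamMinus * R sStar ≤ D u + lamMinus * R u ∧
      D tMinus + lamMinus * R tMinus ≤ D u + lamMinus * R u) := by
  have hlt : lamMinus < lam := by
    rw [hlamMinus, Finset.sup'_lt_iff]
    intro t ht
    have ht : R sStar < R t := (Finset.mem_filter.1 ht).2
    exact (sub_div_sub_lt_iff_add_mul_lt ht).2 (hstrict t fun h => (h ▸ ht).false)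
  have hstar_le : ∀ u, R sStar < R u →
      D sStar + lamMinus * R sStar ≤ D u + lamMinus * R u := fun u hu =>
    (sub_div_sub_le_iff_add_mul_le hu).1 <| hlamMinus ▸
      Finset.le_sup' (fun t => (D sStar - D t) / (R t - R sStar)) (by simpa using hu)
  have htie := (sub_div_sub_eq_iff_add_mul_eq htM).1 hattain
  refine ⟨hlt, fun u hu => ?_⟩
  rcases hu with rfl | hu
  · exact ⟨le_rfl, htie.le⟩
  · exact ⟨hstar_le u hu, htie.le.trans (hstar_le u hu)⟩
end

section
/- Let S be a finite set with D, R : S → ℝ, λ ∈ ℝ, and suppose s* is the unique Lagrangian minimizer for λ. If T = {t ∈ S : R(t) > R(s*)} is nonempty and λ⁻ = max_{t∈T} (D(s*) − D(t))/(R(t) − R(s*)), then for every μ with λ⁻ < μ ≤ λ, s* remains the unique Lagrangian minimizer over S for multiplier μ. (No new optimal solution with larger rate emerges before the singular value λ⁻ is reached.) -/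
/-!
The gap `(D t + μ R t) - (D s* + μ R s*)` is affine in `μ` with slope `R t - R s*`. For a
competitor of larger rate it is positive exactly when `μ` exceeds the breakpoint
`(D s* - D t) / (R t - R s*)`, which is at most `λ⁻`; for any other competitor the gap is
nonincreasing in `μ`, so its positivity at `λ` persists for `μ ≤ λ`.
-/

theorem lagrangian_lt_of_breakpoint_lt {Dt Rt Ds Rs mu : ℝ} (hR : Rs < Rt)
    (hmu : (Ds - Dt) / (Rt - Rs) < mu) : Ds + mu * Rs < Dt + mu * Rt := by
  have := (div_lt_iff₀ (sub_pos.mpr hR)).mp hmu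
  linarith

theorem lagrangian_lt_of_le_multiplier {Dt Rt Ds Rs lam mu : ℝ} (hR : Rt ≤ Rs) (hmu : mu ≤ lam)
    (hlam : Ds + lam * Rs < Dt + lam * Rt) : Ds + mu * Rs < Dt + mu * Rt := by
  nlinarith [mul_nonneg (sub_nonneg.mpr hmu) (sub_nonneg.mpr hR)]

theorem stmt_13_general {S : Type*} [Fintype S] (D R : S → ℝ) (lam : ℝ) (sStar : S)
    (hstrict : ∀ t : S, t ≠ sStar → D sStar + lam * R sStar < D t + lam * R t)
    (hT : (Finset.univ.filter (fun t : S => R sStar < R t)).Nonempty)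
    (lamMinus : ℝ)
    (hlamMinus : lamMinus =
      (Finset.univ.filter (fun t : S => R sStar < R t)).sup' hT
        (fun t => (D sStar - D t) / (R t - R sStar)))
    (mu : ℝ) (hmu₁ : lamMinus < mu) (hmu₂ : mu ≤ lam) :
    ∀ t : S, t ≠ sStar → D sStar + mu * R sStar < D t + mu * R t := by
  intro t ht
  rcases lt_or_ge (R sStar) (R t) with hR | hR
  · have hbreak : (D sStar - D t) / (R t - R sStar) ≤ lamMinus :=
      hlamMinus ▸ Finset.le_sup' (fun t => (D sStar - D t) / (R t - R sStar))
        (Finset.mem_filter.mpr ⟨Finset.mem_univ t, hR⟩)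
    exact lagrangian_lt_of_breakpoint_lt hR (hbreak.trans_lt hmu₁)
  · exact lagrangian_lt_of_le_multiplier hR hmu₂ (hstrict t ht)

/-- No new optimal solution emerges strictly between two neighboring singular values:
for `lamMinus < mu ≤ lam`, the unique minimizer for `lam` stays the unique minimizer. -/
theorem stmt_13 {S : Type*} [Fintype S] (D R : S → ℝ) (lam : ℝ) (sStar : S)
    (hstrict : ∀ t : S, t ≠ sStar → D sStar + lam * R sStar < D t + lam * R t)
    (hsmall : ∀ t : S, t ≠ sStar → R t ≤ R sStar → D sStar < D t)
    (hT : (Finset.univ.filter (fun t : S => R sStar < R t)).Nonempty)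
    (lamMinus : ℝ)
    (hlamMinus : lamMinus =
      (Finset.univ.filter (fun t : S => R sStar < R t)).sup' hT
        (fun t => (D sStar - D t) / (R t - R sStar)))
    (mu : ℝ) (hmu₁ : lamMinus < mu) (hmu₂ : mu ≤ lam) :
    ∀ t : S, t ≠ sStar → D sStar + mu * R sStar < D t + mu * R t :=
  stmt_13_general D R lam sStar hstrict hT lamMinus hlamMinus mu hmu₁ hmu₂
end
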